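/- arXiv:2602.21194 — 2 statements merged into one kernel-verified Lean document; each statement's English description precedes it below -/
import Mathlib

section
/- Let L be a lattice, G ⊆ L a nestable set, and N ⊆ G a nested set. Then for every g ∈ N, the set {f ∈ N : f > g} of elements of N strictly above g is totally ordered (a chain). Consequently, every non-maximal element of N is covered (within N) by a unique element of N, so the Hasse diagram of N is a forest. -/
def Nestable {L : Type*} [Lattice L] [BoundedOrder L] (G : Set L) : Prop :=
  (∀ g ∈ G, ⊥ < g) ∧ (⊤ : L) ∈ G ∧
    ∀ f ∈ G, ∀ g ∈ G, ¬ f ≤ g → ¬ g ≤ f → f ⊔ g ∉ G → f ⊓ g = ⊥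

def Nested {L : Type*} [Lattice L] [BoundedOrder L] (G N : Set L) : Prop :=
  N ⊆ G ∧ ∀ s : Finset L, ↑s ⊆ N → 2 ≤ s.card →
    (∀ f ∈ s, ∀ g ∈ s, f ≠ g → ¬ f ≤ g) → s.sup id ∉ G

/-! In a nested set two incomparable elements have join outside `G`, so nestability forces
their meet to be `⊥`; two incomparable elements above a common `g ∈ G` would have meet
`≥ g > ⊥`. Hence the elements above `g` form a chain, and a finite chain has a least element. -/

theorem IsChain.isLeast_of_minimal {α : Type*} [PartialOrder α] {s : Set α} {x : α}
    (hs : IsChain (· ≤ ·) s) (hx : Minimal (· ∈ s) x) : IsLeast s x := by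
  refine ⟨hx.prop, fun y hy => ?_⟩
  rcases eq_or_ne x y with rfl | hne
  · exact le_rfl
  · exact (hs hx.prop hy hne).elim id (hx.le_of_le hy)

theorem Set.Finite.exists_isLeast_of_isChain {α : Type*} [PartialOrder α] {s : Set α}
    (hfin : s.Finite) (hs : IsChain (· ≤ ·) s) (hne : s.Nonempty) : ∃ x, IsLeast s x :=
  (hfin.exists_minimal hne).imp fun _ => hs.isLeast_of_minimal

section Nested

variable {L : Type*} [Lattice L] [BoundedOrder L] {G N : Set L}

theorem Nested.sup_notMem_of_incomparable (hN : Nested G N) {f g : L} (hf : f ∈ N)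
    (hg : g ∈ N) (hfg : ¬ f ≤ g) (hgf : ¬ g ≤ f) : f ⊔ g ∉ G := by
  classical
  have hne : f ≠ g := fun h => hfg h.le
  have hsub : (↑({f, g} : Finset L) : Set L) ⊆ N := by
    simpa [Set.insert_subset_iff] using ⟨hf, hg⟩
  have hantichain : ∀ a ∈ ({f, g} : Finset L), ∀ b ∈ ({f, g} : Finset L), a ≠ b → ¬ a ≤ b := by
    simp only [Finset.mem_insert, Finset.mem_singleton]
    rintro a (rfl | rfl) b (rfl | rfl) hab <;> simp_all
  simpa using hN.2 {f, g} hsub (Finset.card_pair hne).ge hantichain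

theorem Nested.inf_eq_bot_of_incomparable (hG : Nestable G) (hN : Nested G N) {f g : L}
    (hf : f ∈ N) (hg : g ∈ N) (hfg : ¬ f ≤ g) (hgf : ¬ g ≤ f) : f ⊓ g = ⊥ :=
  hG.2.2 f (hN.1 hf) g (hN.1 hg) hfg hgf (hN.sup_notMem_of_incomparable hf hg hfg hgf)

theorem Nested.isChain_above (hG : Nestable G) (hN : Nested G N) {g : L} (hg : g ∈ N) :
    IsChain (· ≤ ·) {f ∈ N | g < f} := by
  intro f₁ hf₁ f₂ hf₂ _
  by_contra! hincomp
  have hbot : f₁ ⊓ f₂ = ⊥ :=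
    hN.inf_eq_bot_of_incomparable hG hf₁.1 hf₂.1 hincomp.1 hincomp.2
  have hle : g ≤ f₁ ⊓ f₂ := le_inf hf₁.2.le hf₂.2.le
  exact (hG.1 g (hN.1 hg)).ne' (le_bot_iff.mp (hbot ▸ hle))

end Nested

/-- For every `g` in a nested set `N`, the elements of `N` strictly above `g` form a
chain; consequently every non-maximal element of `N` is covered within `N` by a
unique element (the minimum of the elements of `N` strictly above it). -/
theorem nested_above_is_chain {L : Type*} [Lattice L] [BoundedOrder L] [Finite L]
    {G N : Set L} (hG : Nestable G) (hN : Nested G N) :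
    (∀ g ∈ N, IsChain (· ≤ ·) {f ∈ N | g < f}) ∧
    (∀ g ∈ N, (∃ f ∈ N, g < f) →
      ∃! f : L, f ∈ N ∧ g < f ∧ ∀ h ∈ N, g < h → f ≤ h) := by
  refine ⟨fun g hg => hN.isChain_above hG hg, fun g hg hne => ?_⟩
  obtain ⟨m, hm⟩ := (Set.toFinite {f ∈ N | g < f}).exists_isLeast_of_isChain
    (hN.isChain_above hG hg) hne
  refine ⟨m, ⟨hm.1.1, hm.1.2, fun h hh hgh => hm.2 ⟨hh, hgh⟩⟩, ?_⟩
  rintro f ⟨hf, hgf, hfle⟩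
  exact (hm.unique ⟨⟨hf, hgf⟩, fun h hh => hfle h hh.1 hh.2⟩).symm
end

section
/- Let E be a finite set and N a laminar family of nonempty subsets of E (i.e., for all f, g ∈ N either f ⊆ g, g ⊆ f, or f ∩ g = ∅). For each f ∈ N, let M_f be the set of maximal elements of {g ∈ N : g ⊊ f}, and suppose a choice h_f ∈ f \ ⋃_{g ∈ M_f} g is given for each f ∈ N (assume such elements exist). Then for every f ∈ N: {g ∈ N : h_g ∈ f} = {g ∈ N : g ⊆ f}. -/
/-!
If `h g ∈ f` then `f` meets `g`, so by laminarity `g ⊆ f` or `f ⊊ g`. In the second case, by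
finiteness `f` lies in some maximal proper member `m` of `N` below `g`, and `h g ∈ f ⊆ m`
contradicts the choice of `h g`.
-/

theorem Set.Finite.exists_maximal_mem_between {α : Type*} [PartialOrder α] {N : Set α}
    (hN : N.Finite) {a b : α} (ha : a ∈ N) (hab : a < b) :
    ∃ m ∈ N, a ≤ m ∧ m < b ∧ ∀ c ∈ N, m ≤ c → c < b → c = m := by
  obtain ⟨m, ⟨hmN, ham, hmb⟩, hmax⟩ :=
    (hN.subset fun x hx => hx.1 : {x | x ∈ N ∧ a ≤ x ∧ x < b}.Finite).exists_maximalFor id _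
      ⟨a, ha, le_rfl, hab⟩
  exact ⟨m, hmN, ham, hmb, fun c hcN hmc hcb =>
    le_antisymm (hmax ⟨hcN, ham.trans hmc, hcb⟩ hmc) hmc⟩

theorem subset_of_private_mem {E : Type*} {N : Set (Set E)} (hN : N.Finite)
    (hlam : ∀ f ∈ N, ∀ g ∈ N, f ⊆ g ∨ g ⊆ f ∨ f ∩ g = ∅)
    {h : Set E → E} (hmem : ∀ f ∈ N, h f ∈ f)
    (hpriv : ∀ f ∈ N, ∀ g ∈ N, g ⊂ f →
      (∀ g' ∈ N, g ⊆ g' → g' ⊂ f → g' = g) → h f ∉ g)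
    {f g : Set E} (hf : f ∈ N) (hg : g ∈ N) (hgf : h g ∈ f) : g ⊆ f := by
  rcases hlam f hf g hg with hfg | hsub | hdisj
  · by_contra hngf
    obtain ⟨m, hmN, hfm, hmg, hmax⟩ :=
      hN.exists_maximal_mem_between hf (ssubset_of_subset_not_subset hfg hngf)
    exact hpriv g hg m hmN hmg hmax (hfm hgf)
  · exact hsub
  · exact absurd hdisj (Set.nonempty_iff_ne_empty.mp ⟨h g, hgf, hmem g hg⟩)

theorem laminar_private_atom_general {E : Type*} [Fintype E] (N : Set (Set E))
    (hlam : ∀ f ∈ N, ∀ g ∈ N, f ⊆ g ∨ g ⊆ f ∨ f ∩ g = ∅)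
    (h : Set E → E)
    (hmem : ∀ f ∈ N, h f ∈ f)
    (hpriv : ∀ f ∈ N, ∀ g ∈ N, g ⊂ f →
      (∀ g' ∈ N, g ⊆ g' → g' ⊂ f → g' = g) → h f ∉ g) :
    ∀ f ∈ N, {g | g ∈ N ∧ h g ∈ f} = {g | g ∈ N ∧ g ⊆ f} := by
  intro f hf
  ext g
  exact ⟨fun ⟨hg, hgf⟩ => ⟨hg, subset_of_private_mem N.toFinite hlam hmem hpriv hf hg hgf⟩,
    fun ⟨hg, hsub⟩ => ⟨hg, hsub (hmem g hg)⟩⟩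

/-- Let `N` be a laminar family of nonempty subsets of a finite set `E`, and for
each `f ∈ N` let `h f` be an element of `f` lying in no maximal proper member of
`N` below `f`. Then for every `f ∈ N`, `{g ∈ N : h g ∈ f} = {g ∈ N : g ⊆ f}`. -/
theorem laminar_private_atom {E : Type*} [Fintype E] (N : Set (Set E))
    (hlam : ∀ f ∈ N, ∀ g ∈ N, f ⊆ g ∨ g ⊆ f ∨ f ∩ g = ∅)
    (hne : ∀ f ∈ N, f.Nonempty)
    (h : Set E → E)
    (hmem : ∀ f ∈ N, h f ∈ f)
    (hpriv : ∀ f ∈ N, ∀ g ∈ N, g ⊂ f →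
      (∀ g' ∈ N, g ⊆ g' → g' ⊂ f → g' = g) → h f ∉ g) :
    ∀ f ∈ N, {g | g ∈ N ∧ h g ∈ f} = {g | g ∈ N ∧ g ⊆ f} :=
  laminar_private_atom_general N hlam h hmem hpriv
end
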